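/- arXiv:2504.02135 — 2 statements merged into one kernel-verified Lean document; each statement's English description precedes it below -/
import Mathlib

section
/- Let $\varepsilon \in (0,1)$. For each integer $n \ge 2$ let $k(n) = \lfloor n - n^{1-\varepsilon} \rfloor + 1$ and for $k(n) \le j \le n$ set $w_j = \frac{1/j - 1/(j+1)}{1/k(n) - 1/(n+1)}$. Define the entropy $H_n = -\sum_{j=k(n)}^{n} w_j \ln w_j$. Then $\liminf_{n \to \infty} \frac{H_n}{\ln n} \ge 1 - \varepsilon$. -/
/-!
The weights `w_j = 1 / (j (j + 1)) / S` decrease in `j`, so the entropy is at least the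
min-entropy `-log w_k = log ((k + 1)(n + 1 - k) / (n + 1))`. For `k = ⌊n - n^(1-ε)⌋ + 1` the
factor `n + 1 - k` is at least `n^(1-ε)` and `(k + 1) / (n + 1) → 1`, giving
`H_n ≥ (1 - ε) log n + o(log n)`. Jensen's bound `H_n ≤ log n` keeps `H_n / log n` bounded above,
so that its `liminf` is not a junk value.
-/

open Filter Real Finset Topology

theorem neg_sum_mul_log_le_log_card {ι : Type*} (s : Finset ι) (w : ι → ℝ)
    (hw₀ : ∀ i ∈ s, 0 ≤ w i) (hw₁ : ∑ i ∈ s, w i = 1) :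
    -∑ i ∈ s, w i * log (w i) ≤ log #s := by
  have hs : (0 : ℝ) < #s := by
    have : s.Nonempty := Finset.nonempty_of_sum_ne_zero (by rw [hw₁]; exact one_ne_zero)
    exact_mod_cast this.card_pos
  have jensen := concaveOn_negMulLog.le_map_sum (t := s) (w := fun _ ↦ (#s : ℝ)⁻¹) (p := w)
    (fun _ _ ↦ by positivity) (by simp [hs.ne']) (fun i hi ↦ hw₀ i hi)
  rw [← Finset.smul_sum, ← Finset.smul_sum, hw₁, smul_eq_mul, smul_eq_mul, mul_one] at jensen
  simp only [negMulLog, neg_mul, Finset.sum_neg_distrib, log_inv] at jensen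
  rwa [← mul_neg, inv_mul_le_iff₀ hs, mul_inv_cancel_left₀ hs.ne', neg_neg] at jensen

theorem neg_log_le_neg_sum_mul_log {ι : Type*} (s : Finset ι) (w : ι → ℝ) {M : ℝ}
    (hw₀ : ∀ i ∈ s, 0 ≤ w i) (hw₁ : ∑ i ∈ s, w i = 1) (hwM : ∀ i ∈ s, w i ≤ M) :
    -log M ≤ -∑ i ∈ s, w i * log (w i) := by
  have hterm : ∀ i ∈ s, w i * log (w i) ≤ w i * log M := by
    intro i hi
    rcases (hw₀ i hi).eq_or_lt with h | h
    · simp [← h]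
    · exact mul_le_mul_of_nonneg_left (log_le_log h (hwM i hi)) h.le
  have := Finset.sum_le_sum hterm
  rw [← Finset.sum_mul, hw₁, one_mul] at this
  linarith

theorem sum_Icc_one_div_sub_one_div_add_one {k n : ℕ} (hkn : k ≤ n) :
    ∑ j ∈ Icc k n, (1 / (j : ℝ) - 1 / (j + 1)) = 1 / k - 1 / (n + 1) := by
  induction n, hkn using Nat.le_induction with
  | base => simp
  | succ n hkn ih =>
    rw [sum_Icc_succ_top (by omega), ih]
    push_cast
    ring

theorem one_div_sub_one_div_add_one {x : ℝ} (hx : 0 < x) :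
    1 / x - 1 / (x + 1) = 1 / (x * (x + 1)) := by
  field_simp
  ring

noncomputable def intervalWeight (k n j : ℕ) : ℝ :=
  (1 / (j : ℝ) - 1 / (j + 1)) / (1 / (k : ℝ) - 1 / (n + 1))

noncomputable def intervalEntropy (k n : ℕ) : ℝ :=
  -∑ j ∈ Icc k n, intervalWeight k n j * log (intervalWeight k n j)

section

variable {k n : ℕ}

theorem one_div_sub_one_div_pos (hk : 1 ≤ k) (hkn : k ≤ n) :
    0 < 1 / (k : ℝ) - 1 / (n + 1) := by
  have : (k : ℝ) < n + 1 := by exact_mod_cast Nat.lt_succ_of_le hkn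
  have : 1 / ((n : ℝ) + 1) < 1 / k := one_div_lt_one_div_of_lt (by exact_mod_cast hk) this
  linarith

theorem intervalWeight_pos {j : ℕ} (hk : 1 ≤ k) (hkj : k ≤ j) (hjn : j ≤ n) :
    0 < intervalWeight k n j := by
  have hj : (0 : ℝ) < j := by exact_mod_cast (by omega : 0 < j)
  rw [intervalWeight, one_div_sub_one_div_add_one hj]
  exact div_pos (by positivity) (one_div_sub_one_div_pos hk (hkj.trans hjn))

theorem intervalWeight_le_intervalWeight_self {j : ℕ} (hk : 1 ≤ k) (hkn : k ≤ n) (hkj : k ≤ j) :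
    intervalWeight k n j ≤ intervalWeight k n k := by
  have hk₀ : (0 : ℝ) < k := by exact_mod_cast hk
  have hkj' : (k : ℝ) ≤ j := by exact_mod_cast hkj
  rw [intervalWeight, intervalWeight, one_div_sub_one_div_add_one hk₀,
    one_div_sub_one_div_add_one (hk₀.trans_le hkj')]
  gcongr
  exact (one_div_sub_one_div_pos hk hkn).le

theorem intervalWeight_self (hk : 1 ≤ k) (hkn : k ≤ n) :
    intervalWeight k n k = (n + 1) / ((k + 1) * (n + 1 - k)) := by
  have hk₀ : (0 : ℝ) < k := by exact_mod_cast hk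
  have hkn' : (k : ℝ) < n + 1 := by exact_mod_cast Nat.lt_succ_of_le hkn
  rw [intervalWeight]
  field_simp [(by linarith : (n : ℝ) + 1 - k ≠ 0)]
  ring

theorem sum_intervalWeight (hk : 1 ≤ k) (hkn : k ≤ n) :
    ∑ j ∈ Icc k n, intervalWeight k n j = 1 := by
  unfold intervalWeight
  rw [← sum_div, sum_Icc_one_div_sub_one_div_add_one hkn,
    div_self (one_div_sub_one_div_pos hk hkn).ne']

theorem log_le_intervalEntropy (hk : 1 ≤ k) (hkn : k ≤ n) :
    log ((k + 1) * (n + 1 - k) / (n + 1)) ≤ intervalEntropy k n := by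
  have h := neg_log_le_neg_sum_mul_log (Icc k n) (intervalWeight k n)
    (fun j hj ↦ (intervalWeight_pos hk (mem_Icc.1 hj).1 (mem_Icc.1 hj).2).le)
    (sum_intervalWeight hk hkn)
    (fun j hj ↦ intervalWeight_le_intervalWeight_self hk hkn (mem_Icc.1 hj).1)
  rwa [intervalWeight_self hk hkn, ← log_inv, inv_div] at h

theorem intervalEntropy_le_log (hk : 1 ≤ k) : intervalEntropy k n ≤ log n := by
  rcases le_or_gt k n with hkn | hnk
  · refine (neg_sum_mul_log_le_log_card (Icc k n) (intervalWeight k n)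
      (fun j hj ↦ (intervalWeight_pos hk (mem_Icc.1 hj).1 (mem_Icc.1 hj).2).le)
      (sum_intervalWeight hk hkn)).trans (log_le_log ?_ ?_)
    · exact_mod_cast (nonempty_Icc.2 hkn).card_pos
    · rw [Nat.card_Icc]
      exact_mod_cast (by omega : n + 1 - k ≤ n)
  · simp [intervalEntropy, Icc_eq_empty_of_lt hnk, log_natCast_nonneg]

end

theorem log_mul_sub_div_le_intervalEntropy_floor {n : ℕ} {x : ℝ} (hx₀ : 0 < x) (hxn : x < n) :
    log (x * (n - x) / (n + 1)) ≤ intervalEntropy (⌊x⌋₊ + 1) n := by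
  have hkn : ⌊x⌋₊ + 1 ≤ n := (Nat.floor_lt hx₀.le).2 hxn
  have hgap : 0 < (n : ℝ) - x := by linarith
  refine (log_le_log (by positivity) ?_).trans (log_le_intervalEntropy (Nat.le_add_left 1 _) hkn)
  have hlt := Nat.lt_floor_add_one x
  have hle := Nat.floor_le hx₀.le
  push_cast
  refine div_le_div_of_nonneg_right (mul_le_mul ?_ ?_ hgap.le (by positivity)) (by positivity)
  all_goals linarith

theorem mul_log_add_log_le_intervalEntropy_floor {n : ℕ} {p : ℝ} (hp : p < 1) (hn : 2 ≤ n) :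
    p * log n + log ((n - n ^ p) / (n + 1)) ≤ intervalEntropy (⌊(n : ℝ) - n ^ p⌋₊ + 1) n := by
  have hn' : (1 : ℝ) < n := by exact_mod_cast hn
  have hpos : 0 < (n : ℝ) ^ p := rpow_pos_of_pos (by linarith) p
  have hlt : (n : ℝ) ^ p < n := rpow_lt_self_of_one_lt hn' hp
  convert log_mul_sub_div_le_intervalEntropy_floor (x := n - n ^ p) (by linarith) (by linarith)
    using 1
  rw [sub_sub_cancel, mul_div_right_comm, log_mul (by positivity) hpos.ne',
    log_rpow (by linarith), add_comm]

theorem tendsto_sub_rpow_div_add_one {p : ℝ} (hp : p < 1) :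
    Tendsto (fun n : ℕ ↦ ((n : ℝ) - n ^ p) / (n + 1)) atTop (𝓝 1) := by
  have hsmall : Tendsto (fun n : ℕ ↦ (n : ℝ) ^ (p - 1)) atTop (𝓝 0) := by
    have h := (tendsto_rpow_neg_atTop (by linarith : 0 < 1 - p)).comp tendsto_natCast_atTop_atTop
    rwa [neg_sub] at h
  have h := ((tendsto_const_nhds (x := (1 : ℝ))).sub hsmall).mul
    (tendsto_natCast_div_add_atTop (1 : ℝ))
  rw [sub_zero, mul_one] at h
  refine h.congr' ?_
  filter_upwards [eventually_ge_atTop 1] with n hn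
  have hn₀ : (0 : ℝ) < n := by exact_mod_cast hn
  rw [rpow_sub hn₀, rpow_one]
  field_simp

theorem stmt2 (ε : ℝ) (hε : ε ∈ Set.Ioo (0:ℝ) 1) :
    (1 - ε) ≤ Filter.atTop.liminf (fun n : ℕ =>
      (-(∑ j ∈ Finset.Icc (⌊(n : ℝ) - (n : ℝ) ^ (1 - ε)⌋₊ + 1) n,
          (((1 : ℝ) / (j : ℝ) - 1 / ((j : ℝ) + 1)) /
              (1 / ((⌊(n : ℝ) - (n : ℝ) ^ (1 - ε)⌋₊ : ℝ) + 1) - 1 / ((n : ℝ) + 1))) *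
            Real.log
              (((1 : ℝ) / (j : ℝ) - 1 / ((j : ℝ) + 1)) /
                (1 / ((⌊(n : ℝ) - (n : ℝ) ^ (1 - ε)⌋₊ : ℝ) + 1) - 1 / ((n : ℝ) + 1))))) /
        Real.log n) := by
  have hp : 1 - ε < 1 := by linarith [hε.1]
  set H : ℕ → ℝ := fun n ↦ intervalEntropy (⌊(n : ℝ) - n ^ (1 - ε)⌋₊ + 1) n / log n
  set b : ℕ → ℝ := fun n ↦ (1 - ε) + log ((n - n ^ (1 - ε)) / (n + 1)) / log n
  have hb : Tendsto b atTop (𝓝 (1 - ε)) := by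
    have hlog := (tendsto_sub_rpow_div_add_one hp).log one_ne_zero
    simpa using tendsto_const_nhds.add
      (hlog.div_atTop (tendsto_log_atTop.comp tendsto_natCast_atTop_atTop))
  have hbH : ∀ᶠ n in atTop, b n ≤ H n := by
    filter_upwards [eventually_ge_atTop 2] with n hn
    have hlog : 0 < log n := log_pos (by exact_mod_cast hn)
    rw [le_div_iff₀ hlog, add_mul, div_mul_cancel₀ _ hlog.ne']
    exact mul_log_add_log_le_intervalEntropy_floor hp hn
  have hH : ∀ᶠ n in atTop, H n ≤ 1 :=
    Eventually.of_forall fun n ↦ div_le_one_of_le₀ (intervalEntropy_le_log (Nat.le_add_left 1 _))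
      (log_natCast_nonneg n)
  have h := liminf_le_liminf hbH hb.isBoundedUnder_ge (isCoboundedUnder_ge_of_eventually_le _ hH)
  rw [hb.liminf_eq] at h
  refine h.trans_eq (congrArg (liminf · atTop) (funext fun n ↦ ?_))
  simp only [H, intervalEntropy, intervalWeight, Nat.cast_add, Nat.cast_one]
end

section
/- Fix $\alpha \in (0,1)$ and $h \in (0,1)$. Among all sequences $(x_j)_{j=1}^\infty$ of nonnegative reals with $\sum_{j=1}^\infty x_j = 1$ and $x_{j+1} \le \alpha x_j$ for all $j \ge 1$, the sum $\sum_{j=1}^\infty x_j^h$ is finite and bounded above by $\frac{(1-\alpha)^h}{1 - \alpha^h}$, with the bound attained by the geometric sequence $x_j = (1-\alpha)\alpha^{j-1}$. -/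
/-- Key scalar inequality: for `t ∈ [0, α]`, `(1-α^h)(1-t)^h ≤ (1-α)^h (1-t^h)`. -/
lemma stmt4_key (α h : ℝ) (hα : α ∈ Set.Ioo (0:ℝ) 1) (hh : h ∈ Set.Ioo (0:ℝ) 1) :
    ∀ t ∈ Set.Icc (0:ℝ) α, (1 - α ^ h) * (1 - t) ^ h ≤ (1 - α) ^ h * (1 - t ^ h) := by
  obtain ⟨hα0, hα1⟩ := hα
  obtain ⟨hh0, hh1⟩ := hh
  have h1α : (0:ℝ) < 1 - α := by linarith
  have hαh1 : α ^ h < 1 := Real.rpow_lt_one hα0.le hα1 hh0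
  have h1αh : (0:ℝ) < 1 - α ^ h := by linarith
  set ψ : ℝ → ℝ := fun s => (1 - α) ^ h * (1 - s ^ h) - (1 - α ^ h) * (1 - s) ^ h with hψ
  have hanti : AntitoneOn ψ (Set.Icc 0 α) := by
    have hderiv : ∀ t ∈ Set.Ioo (0:ℝ) α,
        HasDerivAt ψ ((1 - α) ^ h * (-(h * t ^ (h - 1)))
          - (1 - α ^ h) * (-1 * h * (1 - t) ^ (h - 1))) t := by
      intro t ht
      have h1t : (0:ℝ) < 1 - t := by linarith [ht.2]
      have hd1 : HasDerivAt (fun s : ℝ => s ^ h) (h * t ^ (h - 1)) t :=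
        Real.hasDerivAt_rpow_const (Or.inl ht.1.ne')
      have hd2 : HasDerivAt (fun s : ℝ => 1 - s) (-1) t := by
        simpa using (hasDerivAt_id t).const_sub 1
      have hd3 : HasDerivAt (fun s : ℝ => (1 - s) ^ h) (-1 * h * (1 - t) ^ (h - 1)) t :=
        hd2.rpow_const (Or.inl h1t.ne')
      have hd4 : HasDerivAt (fun s : ℝ => 1 - s ^ h) (-(h * t ^ (h - 1))) t := by
        simpa using hd1.const_sub 1
      exact ((hd4.const_mul ((1 - α) ^ h)).sub (hd3.const_mul (1 - α ^ h)))
    apply antitoneOn_of_deriv_nonpos (convex_Icc 0 α)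
    · apply ContinuousOn.sub
      · apply continuousOn_const.mul
        apply continuousOn_const.sub
        intro s _
        exact (Real.continuousAt_rpow_const s h (Or.inr hh0.le)).continuousWithinAt
      · apply continuousOn_const.mul
        apply ContinuousOn.rpow_const
        · exact (continuousOn_const.sub continuousOn_id)
        · intro s _
          exact Or.inr hh0.le
    · rw [interior_Icc]
      intro t ht
      exact (hderiv t ht).differentiableAt.differentiableWithinAt
    · rw [interior_Icc]
      intro t ht
      rw [(hderiv t ht).deriv]
      have h1t : (0:ℝ) < 1 - t := by linarith [ht.2]
      -- need : (1 - α^h) * (1-t)^(h-1) ≤ (1 - α)^h * t^(h-1)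
      have ha : (1 - t) ^ (h - 1) ≤ (1 - α) ^ (h - 1) :=
        Real.rpow_le_rpow_of_nonpos h1α (by linarith [ht.2]) (by linarith)
      have hw1 : (1:ℝ) ≤ α ^ (h - 1) :=
        Real.one_le_rpow_of_pos_of_le_one_of_nonpos hα0 hα1.le (by linarith)
      have hb : 1 - α ^ h ≤ (1 - α) * α ^ (h - 1) := by
        have h1 : α ≤ α ^ h := by
          have := Real.rpow_le_rpow_of_exponent_ge hα0 hα1.le hh1.le
          simpa using this
        nlinarith
      have hc : α ^ (h - 1) ≤ t ^ (h - 1) :=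
        Real.rpow_le_rpow_of_nonpos ht.1 ht.2.le (by linarith)
      have hsplit : (1 - α) * (1 - α) ^ (h - 1) = (1 - α) ^ h := by
        rw [show h = 1 + (h - 1) by ring, Real.rpow_add h1α, Real.rpow_one]
        ring_nf
      have key : (1 - α ^ h) * (1 - t) ^ (h - 1) ≤ (1 - α) ^ h * t ^ (h - 1) := by
        have p1 : (0:ℝ) ≤ (1 - t) ^ (h - 1) := Real.rpow_nonneg h1t.le _
        have p2 : (0:ℝ) ≤ (1 - α) ^ (h - 1) := Real.rpow_nonneg h1α.le _
        have p3 : (0:ℝ) ≤ α ^ (h - 1) := Real.rpow_nonneg hα0.le _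
        have p4 : (0:ℝ) ≤ (1 - α) ^ h := Real.rpow_nonneg h1α.le _
        calc (1 - α ^ h) * (1 - t) ^ (h - 1)
            ≤ (1 - α ^ h) * (1 - α) ^ (h - 1) := by nlinarith
          _ ≤ ((1 - α) * α ^ (h - 1)) * (1 - α) ^ (h - 1) := by nlinarith
          _ = (1 - α) ^ h * α ^ (h - 1) := by rw [← hsplit]; ring
          _ ≤ (1 - α) ^ h * t ^ (h - 1) := by nlinarith
      nlinarith [hh0]
  intro t ht
  have h0 : ψ α = 0 := by simp [hψ]; ring
  have := hanti ht (Set.mem_Icc.mpr ⟨hα0.le, le_refl α⟩) ht.2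
  rw [h0] at this
  simp only [hψ] at this
  linarith

theorem stmt4 (α h : ℝ) (hα : α ∈ Set.Ioo (0:ℝ) 1) (hh : h ∈ Set.Ioo (0:ℝ) 1)
    (x : ℕ → ℝ) (hx : ∀ j, 0 ≤ x j) (hsum : HasSum x 1)
    (hrec : ∀ j : ℕ, x (j + 1) ≤ α * x j) :
    (Summable fun j => x j ^ h) ∧
    (∑' j : ℕ, x j ^ h) ≤ (1 - α) ^ h / (1 - α ^ h) ∧
    (∑' j : ℕ, ((1 - α) * α ^ j) ^ h) = (1 - α) ^ h / (1 - α ^ h) := by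
  obtain ⟨hα0, hα1⟩ := Set.mem_Ioo.mp hα
  obtain ⟨hh0, hh1⟩ := Set.mem_Ioo.mp hh
  have h1α : (0:ℝ) < 1 - α := by linarith
  have hαh1 : α ^ h < 1 := Real.rpow_lt_one hα0.le hα1 hh0
  have hαh0 : (0:ℝ) < α ^ h := Real.rpow_pos_of_pos hα0 h
  have h1αh : (0:ℝ) < 1 - α ^ h := by linarith
  -- scaled key inequality
  have key2 : ∀ a b : ℝ, 0 ≤ b → b ≤ α * a →
      (a - b) ^ h * (1 - α ^ h) ≤ (1 - α) ^ h * (a ^ h - b ^ h) := by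
    intro a b hb hba
    have ha : 0 ≤ a := by nlinarith
    rcases eq_or_lt_of_le ha with hz | hapos
    · have hb0 : b = 0 := le_antisymm (by nlinarith) hb
      rw [← hz, hb0]
      simp [Real.zero_rpow hh0.ne']
    · set t : ℝ := b / a with htdef
      have ht0 : 0 ≤ t := div_nonneg hb hapos.le
      have htα : t ≤ α := by
        rw [htdef, div_le_iff₀ hapos]
        linarith [hba]
      have h1t : 0 ≤ 1 - t := by linarith
      have e1 : (a - b) ^ h = a ^ h * (1 - t) ^ h := by
        rw [← Real.mul_rpow hapos.le h1t, htdef]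
        congr 1
        field_simp
      have e2 : b ^ h = a ^ h * t ^ h := by
        rw [← Real.mul_rpow hapos.le ht0, htdef]
        congr 1
        field_simp
      have hkey := stmt4_key α h hα hh t (Set.mem_Icc.mpr ⟨ht0, htα⟩)
      have hah : (0:ℝ) ≤ a ^ h := Real.rpow_nonneg hapos.le _
      calc (a - b) ^ h * (1 - α ^ h) = a ^ h * ((1 - α ^ h) * (1 - t) ^ h) := by
            rw [e1]; ring
        _ ≤ a ^ h * ((1 - α) ^ h * (1 - t ^ h)) := by nlinarith
        _ = (1 - α) ^ h * (a ^ h - b ^ h) := by rw [e2]; ring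
  have hsx : Summable x := hsum.summable
  -- tails
  set T : ℕ → ℝ := fun j => ∑' k, x (k + j) with hT
  have hTs : ∀ j, Summable fun k => x (k + j) := fun j => (summable_nat_add_iff j).2 hsx
  have hTdef : ∀ j, T j = ∑' k, x (k + j) := fun j => by rw [hT]
  have hT0 : T 0 = 1 := by
    rw [hTdef 0]
    exact (tsum_congr fun k => by rw [Nat.add_zero]).trans hsum.tsum_eq
  have hTnn : ∀ j, 0 ≤ T j := fun j => by
    rw [hTdef j]; exact tsum_nonneg fun k => hx _
  have hTrec : ∀ j, T j = x j + T (j + 1) := by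
    intro j
    rw [hTdef j, hTdef (j + 1), Summable.tsum_eq_zero_add (hTs j)]
    congr 1
    · rw [Nat.zero_add]
    · exact tsum_congr fun k => by congr 1 <;> omega
  have hTα : ∀ j, T (j + 1) ≤ α * T j := by
    intro j
    rw [hTdef (j + 1), hTdef j]
    calc (∑' k, x (k + (j + 1))) = ∑' k, x (k + j + 1) :=
          tsum_congr fun k => by congr 1 <;> omega
      _ ≤ ∑' k, α * x (k + j) := by
          refine Summable.tsum_le_tsum (fun k => hrec (k + j)) ?_ ((hTs j).mul_left α)
          exact (hTs (j + 1)).congr fun k => by congr 1 <;> omega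
      _ = α * ∑' k, x (k + j) := tsum_mul_left
  have hterm : ∀ j, x j ^ h * (1 - α ^ h) ≤ (1 - α) ^ h * (T j ^ h - T (j + 1) ^ h) := by
    intro j
    have hxj : x j = T j - T (j + 1) := by linarith [hTrec j]
    rw [hxj]
    exact key2 (T j) (T (j + 1)) (hTnn _) (hTα j)
  -- summability
  have hx0le : x 0 ≤ 1 := by
    have := Summable.le_tsum hsx 0 fun j _ => hx j
    rw [hsum.tsum_eq] at this
    exact this
  have hxle : ∀ j, x j ≤ α ^ j := by
    intro j
    induction j with
    | zero => simpa using hx0le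
    | succ n ih =>
      calc x (n + 1) ≤ α * x n := hrec n
        _ ≤ α * α ^ n := mul_le_mul_of_nonneg_left ih hα0.le
        _ = α ^ (n + 1) := (pow_succ' α n).symm
  have hgeo : Summable fun j : ℕ => (α ^ h) ^ j := summable_geometric_of_lt_one hαh0.le hαh1
  have hpowh : ∀ j : ℕ, ((α : ℝ) ^ j) ^ h = (α ^ h) ^ j := by
    intro j
    rw [← Real.rpow_natCast α j, ← Real.rpow_natCast (α ^ h) j,
      ← Real.rpow_mul hα0.le, ← Real.rpow_mul hα0.le, mul_comm]
  have hsummable : Summable fun j => x j ^ h := by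
    refine Summable.of_nonneg_of_le (fun j => Real.rpow_nonneg (hx j) h) (fun j => ?_) hgeo
    calc x j ^ h ≤ (α ^ j) ^ h := Real.rpow_le_rpow (hx j) (hxle j) hh0.le
      _ = (α ^ h) ^ j := hpowh j
  refine ⟨hsummable, ?_, ?_⟩
  · -- the bound
    have hsumle : ∀ n, ∑ j ∈ Finset.range n, x j ^ h ≤ (1 - α) ^ h / (1 - α ^ h) := by
      intro n
      have tel : ∑ j ∈ Finset.range n, (T j ^ h - T (j + 1) ^ h) = T 0 ^ h - T n ^ h :=
        Finset.sum_range_sub' (fun j => T j ^ h) n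
      have hstep : (∑ j ∈ Finset.range n, x j ^ h) * (1 - α ^ h)
          ≤ (1 - α) ^ h * (T 0 ^ h - T n ^ h) := by
        rw [← tel, Finset.mul_sum, Finset.sum_mul]
        exact Finset.sum_le_sum fun j _ => hterm j
      have hT0h : T 0 ^ h = 1 := by rw [hT0, Real.one_rpow]
      have hTnh : 0 ≤ T n ^ h := Real.rpow_nonneg (hTnn n) h
      have p4 : (0:ℝ) ≤ (1 - α) ^ h := Real.rpow_nonneg h1α.le _
      rw [le_div_iff₀ h1αh]
      nlinarith
    exact Summable.tsum_le_of_sum_range_le hsummable hsumle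
  · have heq : ∀ j : ℕ, ((1 - α) * α ^ j) ^ h = (1 - α) ^ h * (α ^ h) ^ j := by
      intro j
      rw [Real.mul_rpow h1α.le (pow_nonneg hα0.le j), hpowh j]
    calc (∑' j : ℕ, ((1 - α) * α ^ j) ^ h) = ∑' j : ℕ, (1 - α) ^ h * (α ^ h) ^ j := by
          simp only [heq]
      _ = (1 - α) ^ h * ∑' j : ℕ, (α ^ h) ^ j := tsum_mul_left
      _ = (1 - α) ^ h * (1 - α ^ h)⁻¹ := by rw [tsum_geometric_of_lt_one hαh0.le hαh1]
      _ = (1 - α) ^ h / (1 - α ^ h) := (div_eq_mul_inv _ _).symm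
end
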